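/- Let X, Θ, Y be separable real Hilbert spaces, U = X × Θ with norm ‖(x,θ)‖_U² = ‖x‖_X² + ‖θ‖_Θ², F : U → Y Lipschitz with constant L, and E : U → Y Lipschitz with constant at most R with ‖E(0)‖_Y ≤ B. For Borel probability measures ν, ν' on U with finite second moments, define the risk R_ν(E) = ∫ ‖F(u) − E(u)‖_Y² dν(u), the 2-Wasserstein distance W₂(ν,ν') as the infimum over all couplings γ of ν and ν' of (∫ ‖u − v‖_U² dγ)^{1/2}, and c(ν,ν') = C₁² √(2(∫‖u‖_U² dν + ∫‖u‖_U² dν')) + 2C₁C₂ where C₁ = L + R and C₂ = ‖F(0)‖_Y + B. Then R_{ν'}(E) ≤ R_ν(E) + c(ν,ν') · W₂(ν,ν'). -/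

import Mathlib

/-!
Put `G = F - E`. It is `C₁`-Lipschitz for `nU` with `‖G 0‖ ≤ C₂`, hence `‖G u‖ ≤ C₂ + C₁ nU u`,
and for all `u, v`
`‖G v‖² - ‖G u‖² = (‖G v‖ - ‖G u‖)(‖G u‖ + ‖G v‖) ≤ C₁ nU (u - v) (2 C₂ + C₁ (nU u + nU v))`.
Integrating against a coupling `γ` of `ν, ν'` and applying Cauchy–Schwarz to both terms, together
with `∫ (nU u + nU v)² dγ ≤ 2 (∫ nU² dν + ∫ nU² dν')`, bounds `R_{ν'}(E) - R_ν(E)` by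
`c(ν, ν') (∫ nU (u - v)² dγ)^{1/2}`; the infimum over couplings gives the claim.
-/

open MeasureTheory
open scoped ENNReal NNReal

noncomputable section

/-- The Hilbert norm on the product `U = X × Θ`: `‖(x, θ)‖_U = √(‖x‖² + ‖θ‖²)`. -/
def nU {X Θ : Type*} [NormedAddCommGroup X] [NormedAddCommGroup Θ] (u : X × Θ) : ℝ :=
  Real.sqrt (‖u.1‖ ^ 2 + ‖u.2‖ ^ 2)

/-- The 2-Wasserstein distance associated with a cost function `d`: the infimum over all
couplings `γ` of `μ` and `μ'` (i.e. probability measures on the product whose marginals are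
`μ` and `μ'`) of `(∫ d(u,v)² dγ)^{1/2}`. -/
def W2 {α : Type*} [MeasurableSpace α] (d : α → α → ℝ) (μ μ' : Measure α) : ℝ :=
  sInf { r : ℝ | ∃ γ : Measure (α × α), IsProbabilityMeasure γ ∧
      γ.map Prod.fst = μ ∧ γ.map Prod.snd = μ' ∧
      r = Real.sqrt (∫ p, d p.1 p.2 ^ 2 ∂γ) }

/-- The squared-error risk `R_ν(E) = ∫ ‖F(u) - E(u)‖² dν(u)`. -/
def risk {X Θ Y : Type*} [NormedAddCommGroup X] [NormedAddCommGroup Θ] [NormedAddCommGroup Y]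
    [MeasurableSpace X] [MeasurableSpace Θ] (F E : X × Θ → Y) (ν : Measure (X × Θ)) : ℝ :=
  ∫ u, ‖F u - E u‖ ^ 2 ∂ν

/-- The hypothesis class `H`: all maps `E : U → Y` that are Lipschitz with constant at most
`R₀` (with respect to the Hilbert product norm on `U`) and satisfy `‖E 0‖ ≤ B`. -/
def Hclass {X Θ Y : Type*} [NormedAddCommGroup X] [NormedAddCommGroup Θ] [NormedAddCommGroup Y]
    (R₀ B : ℝ) : Set (X × Θ → Y) :=
  { E | (∀ u v, ‖E u - E v‖ ≤ R₀ * nU (u - v)) ∧ ‖E 0‖ ≤ B }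

/-- The constant `c(ν,ν') = C₁² √(2(∫‖u‖_U² dν + ∫‖u‖_U² dν')) + 2 C₁ C₂`, where
`C₁ = L + R₀` and `C₂ = ‖F 0‖ + B`. -/
def cShift {X Θ Y : Type*} [NormedAddCommGroup X] [NormedAddCommGroup Θ] [NormedAddCommGroup Y]
    [MeasurableSpace X] [MeasurableSpace Θ] (L R₀ B : ℝ) (F : X × Θ → Y)
    (ν ν' : Measure (X × Θ)) : ℝ :=
  (L + R₀) ^ 2 * Real.sqrt (2 * ((∫ u, nU u ^ 2 ∂ν) + ∫ u, nU u ^ 2 ∂ν'))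
    + 2 * (L + R₀) * (‖F 0‖ + B)

/-- The bound objective `J(ν) = inf_{E ∈ H} R_ν(E) + c(ν, ν_dep) W₂(ν, ν_dep)`, where the
Wasserstein distance on `U = X × Θ` is taken with respect to the Hilbert product norm. -/
def Jobj {X Θ Y : Type*} [NormedAddCommGroup X] [NormedAddCommGroup Θ] [NormedAddCommGroup Y]
    [MeasurableSpace X] [MeasurableSpace Θ] (L R₀ B : ℝ) (F : X × Θ → Y)
    (νdep ν : Measure (X × Θ)) : ℝ :=
  sInf ((fun E => risk F E ν) '' Hclass R₀ B)
    + cShift L R₀ B F ν νdep * W2 (fun u v => nU (u - v)) ν νdep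

section ProductNorm

variable {X Θ Y : Type*} [NormedAddCommGroup X] [NormedAddCommGroup Θ] [NormedAddCommGroup Y]

theorem nU_eq_norm_toLp (u : X × Θ) : nU u = ‖WithLp.toLp 2 u‖ :=
  (WithLp.prod_norm_eq_of_L2 _).symm

theorem nU_nonneg (u : X × Θ) : 0 ≤ nU u := Real.sqrt_nonneg _

theorem nU_sub_le (u v : X × Θ) : nU (u - v) ≤ nU u + nU v := by
  simpa only [nU_eq_norm_toLp, WithLp.toLp_sub] using norm_sub_le _ _

theorem continuous_nU : Continuous (nU : X × Θ → ℝ) := by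
  unfold nU
  fun_prop

theorem continuous_of_norm_sub_le_mul_nU {f : X × Θ → Y} {K : ℝ}
    (hf : ∀ u v, ‖f u - f v‖ ≤ K * nU (u - v)) : Continuous f := by
  have hlip : LipschitzWith K.toNNReal (f ∘ WithLp.ofLp (p := 2)) :=
    LipschitzWith.of_dist_le' fun x y => by
      simpa only [dist_eq_norm, nU_eq_norm_toLp, WithLp.toLp_sub, WithLp.toLp_ofLp,
        Function.comp_apply] using hf x.ofLp y.ofLp
  exact hlip.continuous.comp (WithLp.prod_continuous_toLp 2 X Θ)

theorem nonneg_of_norm_sub_le_mul_nU [Nontrivial (X × Θ)] {f : X × Θ → Y} {K : ℝ}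
    (hf : ∀ u v, ‖f u - f v‖ ≤ K * nU (u - v)) : 0 ≤ K := by
  obtain ⟨u, hu⟩ := exists_ne (0 : X × Θ)
  have hpos : 0 < nU u := by
    rw [nU_eq_norm_toLp]
    exact norm_pos_iff.2 fun h => hu (by simpa using congrArg WithLp.ofLp h)
  refine nonneg_of_mul_nonneg_left ((norm_nonneg (f u - f 0)).trans ?_) hpos
  simpa using hf u 0

variable {G : X × Θ → Y} {K M : ℝ}

theorem norm_le_add_mul_nU (hG : ∀ u v, ‖G u - G v‖ ≤ K * nU (u - v)) (hG0 : ‖G 0‖ ≤ M)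
    (u : X × Θ) : ‖G u‖ ≤ M + K * nU u := by
  have := hG u 0
  rw [sub_zero] at this
  linarith [norm_le_norm_add_norm_sub' (G u) (G 0)]

theorem sq_norm_sub_sq_norm_le (hG : ∀ u v, ‖G u - G v‖ ≤ K * nU (u - v)) (hG0 : ‖G 0‖ ≤ M)
    (hK : 0 ≤ K) (u v : X × Θ) :
    ‖G v‖ ^ 2 - ‖G u‖ ^ 2 ≤ K * nU (u - v) * (2 * M + K * (nU u + nU v)) := by
  have hdiff : ‖G v‖ - ‖G u‖ ≤ K * nU (u - v) :=
    (norm_sub_norm_le _ _).trans (norm_sub_rev (G v) (G u) ▸ hG u v)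
  have hsum : ‖G u‖ + ‖G v‖ ≤ 2 * M + K * (nU u + nU v) := by
    linarith [norm_le_add_mul_nU hG hG0 u, norm_le_add_mul_nU hG hG0 v]
  calc ‖G v‖ ^ 2 - ‖G u‖ ^ 2 = (‖G v‖ - ‖G u‖) * (‖G u‖ + ‖G v‖) := by ring
    _ ≤ _ := mul_le_mul hdiff hsum (by positivity) (mul_nonneg hK (nU_nonneg _))

end ProductNorm

section CauchySchwarz

variable {α : Type*} [MeasurableSpace α] {μ : Measure α} {f g : α → ℝ}

theorem integral_mul_le_sqrt_mul_sqrt (hf0 : 0 ≤ᵐ[μ] f) (hg0 : 0 ≤ᵐ[μ] g) (hf : MemLp f 2 μ)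
    (hg : MemLp g 2 μ) :
    ∫ x, f x * g x ∂μ ≤ √(∫ x, f x ^ 2 ∂μ) * √(∫ x, g x ^ 2 ∂μ) := by
  have h := integral_mul_le_Lp_mul_Lq_of_nonneg Real.HolderConjugate.two_two hf0 hg0
    (by simpa using hf) (by simpa using hg)
  simpa only [Real.sqrt_eq_rpow, Real.rpow_two] using h

theorem integral_le_sqrt_integral_sq [IsProbabilityMeasure μ] (hf0 : 0 ≤ᵐ[μ] f)
    (hf : MemLp f 2 μ) : ∫ x, f x ∂μ ≤ √(∫ x, f x ^ 2 ∂μ) := by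
  simpa using integral_mul_le_sqrt_mul_sqrt hf0 (ae_of_all μ fun _ => zero_le_one) hf
    (memLp_const (1 : ℝ))

end CauchySchwarz

section Coupling

variable {X Θ Y : Type*} [NormedAddCommGroup X] [NormedAddCommGroup Θ] [NormedAddCommGroup Y]
  [MeasurableSpace X] [MeasurableSpace Θ] {G : X × Θ → Y} {K M : ℝ}

theorem memLp_two_norm_comp [OpensMeasurableSpace (X × Θ)] {α : Type*} [MeasurableSpace α]
    {μ : Measure α} [IsFiniteMeasure μ]
    {φ : α → X × Θ} (hφ : AEMeasurable φ μ) (h : MemLp (fun a => nU (φ a)) 2 μ)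
    (hG : ∀ u v, ‖G u - G v‖ ≤ K * nU (u - v)) (hG0 : ‖G 0‖ ≤ M) :
    MemLp (fun a => ‖G (φ a)‖) 2 μ :=
  ((memLp_const M).add (h.const_mul K)).of_le
    ((continuous_of_norm_sub_le_mul_nU hG).norm.measurable.comp_aemeasurable
      hφ).aestronglyMeasurable
    (ae_of_all μ fun a => by
      simpa only [norm_norm, Pi.add_apply] using
        (norm_le_add_mul_nU hG hG0 (φ a)).trans (Real.le_norm_self _))

variable [BorelSpace X] [SecondCountableTopology X] [BorelSpace Θ] [SecondCountableTopology Θ]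
  (γ : Measure ((X × Θ) × (X × Θ)))

theorem memLp_two_nU_sub (h₁ : MemLp (fun p => nU p.1) 2 γ) (h₂ : MemLp (fun p => nU p.2) 2 γ) :
    MemLp (fun p => nU (p.1 - p.2)) 2 γ :=
  (h₁.add h₂).of_le (continuous_nU.comp (continuous_fst.sub continuous_snd)).aestronglyMeasurable
    (ae_of_all γ fun p => by
      simpa only [Pi.add_apply, Real.norm_of_nonneg (nU_nonneg _),
        Real.norm_of_nonneg (add_nonneg (nU_nonneg p.1) (nU_nonneg p.2))] using nU_sub_le p.1 p.2)

variable [IsProbabilityMeasure γ]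

theorem integral_sq_norm_snd_sub_fst_le (hG : ∀ u v, ‖G u - G v‖ ≤ K * nU (u - v))
    (hG0 : ‖G 0‖ ≤ M) (hK : 0 ≤ K) (h₁ : MemLp (fun p => nU p.1) 2 γ)
    (h₂ : MemLp (fun p => nU p.2) 2 γ) :
    ∫ p, ‖G p.2‖ ^ 2 ∂γ - ∫ p, ‖G p.1‖ ^ 2 ∂γ ≤
      2 * K * M * ∫ p, nU (p.1 - p.2) ∂γ +
        K ^ 2 * ∫ p, nU (p.1 - p.2) * (nU p.1 + nU p.2) ∂γ := by
  have hs : MemLp (fun p => nU p.1 + nU p.2) 2 γ := h₁.add h₂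
  have hd := memLp_two_nU_sub γ h₁ h₂
  have hG₁ := memLp_two_norm_comp measurable_fst.aemeasurable h₁ hG hG0
  have hG₂ := memLp_two_norm_comp measurable_snd.aemeasurable h₂ hG hG0
  have hds : Integrable (fun p => nU (p.1 - p.2) * (nU p.1 + nU p.2)) γ := hd.integrable_mul hs
  rw [← integral_sub hG₂.integrable_sq hG₁.integrable_sq, ← integral_const_mul,
    ← integral_const_mul, ← integral_add ((hd.integrable one_le_two).const_mul _) (hds.const_mul _)]
  refine integral_mono (hG₂.integrable_sq.sub hG₁.integrable_sq)
    (((hd.integrable one_le_two).const_mul _).add (hds.const_mul _)) fun p => ?_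
  have := sq_norm_sub_sq_norm_le hG hG0 hK p.1 p.2
  linarith

theorem integral_sq_norm_snd_le (hG : ∀ u v, ‖G u - G v‖ ≤ K * nU (u - v)) (hG0 : ‖G 0‖ ≤ M)
    (hK : 0 ≤ K) (h₁ : MemLp (fun p => nU p.1) 2 γ) (h₂ : MemLp (fun p => nU p.2) 2 γ) :
    ∫ p, ‖G p.2‖ ^ 2 ∂γ ≤ ∫ p, ‖G p.1‖ ^ 2 ∂γ +
      (K ^ 2 * √(2 * (∫ p, nU p.1 ^ 2 ∂γ + ∫ p, nU p.2 ^ 2 ∂γ)) + 2 * K * M) *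
        √(∫ p, nU (p.1 - p.2) ^ 2 ∂γ) := by
  have hd := memLp_two_nU_sub γ h₁ h₂
  have hd0 : 0 ≤ᵐ[γ] fun p => nU (p.1 - p.2) := ae_of_all γ fun _ => nU_nonneg _
  have hs2 : ∫ p, (nU p.1 + nU p.2) ^ 2 ∂γ ≤ 2 * (∫ p, nU p.1 ^ 2 ∂γ + ∫ p, nU p.2 ^ 2 ∂γ) := by
    rw [← integral_add h₁.integrable_sq h₂.integrable_sq, ← integral_const_mul]
    exact integral_mono (h₁.add h₂).integrable_sq
      ((h₁.integrable_sq.add h₂.integrable_sq).const_mul 2)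
      fun p => by nlinarith [sq_nonneg (nU p.1 - nU p.2)]
  have hmean := integral_le_sqrt_integral_sq hd0 hd
  have hcross := (integral_mul_le_sqrt_mul_sqrt hd0
    (ae_of_all γ fun p => add_nonneg (nU_nonneg p.1) (nU_nonneg p.2)) hd (h₁.add h₂)).trans
    (mul_le_mul_of_nonneg_left (Real.sqrt_le_sqrt hs2) (Real.sqrt_nonneg _))
  have hM : 0 ≤ M := (norm_nonneg _).trans hG0
  have := integral_sq_norm_snd_sub_fst_le γ hG hG0 hK h₁ h₂
  nlinarith [mul_le_mul_of_nonneg_left hmean (by positivity : 0 ≤ 2 * K * M),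
    mul_le_mul_of_nonneg_left hcross (sq_nonneg K)]

theorem integral_sq_norm_le_of_coupling (hG : ∀ u v, ‖G u - G v‖ ≤ K * nU (u - v))
    (hG0 : ‖G 0‖ ≤ M) (hK : 0 ≤ K) {ν ν' : Measure (X × Θ)}
    (hν : Integrable (fun u => nU u ^ 2) ν) (hν' : Integrable (fun u => nU u ^ 2) ν')
    (h₁ : γ.map Prod.fst = ν) (h₂ : γ.map Prod.snd = ν') :
    ∫ u, ‖G u‖ ^ 2 ∂ν' ≤ ∫ u, ‖G u‖ ^ 2 ∂ν +
      (K ^ 2 * √(2 * (∫ u, nU u ^ 2 ∂ν + ∫ u, nU u ^ 2 ∂ν')) + 2 * K * M) *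
        √(∫ p, nU (p.1 - p.2) ^ 2 ∂γ) := by
  subst h₁ h₂
  have hmemLp {φ : (X × Θ) × (X × Θ) → X × Θ} (hφ : Measurable φ)
      (h : Integrable (fun u => nU u ^ 2) (γ.map φ)) : MemLp (fun p => nU (φ p)) 2 γ :=
    (memLp_map_measure_iff continuous_nU.aestronglyMeasurable hφ.aemeasurable).1
      ((memLp_two_iff_integrable_sq continuous_nU.aestronglyMeasurable).2 h)
  have hmap {φ : (X × Θ) × (X × Θ) → X × Θ} (hφ : Measurable φ) {f : X × Θ → ℝ}
      (hf : Continuous f) : ∫ u, f u ∂γ.map φ = ∫ p, f (φ p) ∂γ :=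
    integral_map hφ.aemeasurable hf.aestronglyMeasurable
  have hGc : Continuous fun u => ‖G u‖ ^ 2 := (continuous_of_norm_sub_le_mul_nU hG).norm.pow 2
  have hn : Continuous fun u : X × Θ => nU u ^ 2 := continuous_nU.pow 2
  rw [hmap measurable_fst hGc, hmap measurable_snd hGc, hmap measurable_fst hn,
    hmap measurable_snd hn]
  exact integral_sq_norm_snd_le γ hG hG0 hK (hmemLp measurable_fst hν) (hmemLp measurable_snd hν')

end Coupling

section Wasserstein

variable {α : Type*} [MeasurableSpace α] {d : α → α → ℝ} {μ μ' : Measure α}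

theorem W2_nonneg : 0 ≤ W2 d μ μ' :=
  Real.sInf_nonneg (by rintro _ ⟨γ, -, -, -, rfl⟩; exact Real.sqrt_nonneg _)

theorem W2_le_sqrt_integral_sq (γ : Measure (α × α)) [IsProbabilityMeasure γ]
    (h₁ : γ.map Prod.fst = μ) (h₂ : γ.map Prod.snd = μ') :
    W2 d μ μ' ≤ √(∫ p, d p.1 p.2 ^ 2 ∂γ) :=
  csInf_le ⟨0, by rintro _ ⟨γ, -, -, -, rfl⟩; exact Real.sqrt_nonneg _⟩
    ⟨γ, inferInstance, h₁, h₂, rfl⟩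

open scoped Pointwise in
theorem le_add_mul_W2 [IsProbabilityMeasure μ] [IsProbabilityMeasure μ'] {a b c : ℝ} (hc : 0 ≤ c)
    (h : ∀ γ : Measure (α × α), IsProbabilityMeasure γ → γ.map Prod.fst = μ →
      γ.map Prod.snd = μ' → a ≤ b + c * √(∫ p, d p.1 p.2 ^ 2 ∂γ)) :
    a ≤ b + c * W2 d μ μ' := by
  rw [W2, ← smul_eq_mul, ← Real.sInf_smul_of_nonneg hc, ← sub_le_iff_le_add']
  refine le_csInf (Set.Nonempty.smul_set ⟨_, μ.prod μ', inferInstance, by simp, by simp, rfl⟩) ?_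
  rintro _ ⟨_, ⟨γ, hγ, h₁, h₂, rfl⟩, rfl⟩
  exact sub_le_iff_le_add'.2 (h γ hγ h₁ h₂)

end Wasserstein

variable {X Θ Y : Type*}
  [NormedAddCommGroup X] [InnerProductSpace ℝ X] [CompleteSpace X]
  [SecondCountableTopology X] [MeasurableSpace X] [BorelSpace X]
  [NormedAddCommGroup Θ] [InnerProductSpace ℝ Θ] [CompleteSpace Θ]
  [SecondCountableTopology Θ] [MeasurableSpace Θ] [BorelSpace Θ]
  [NormedAddCommGroup Y] [InnerProductSpace ℝ Y] [CompleteSpace Y]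
  [SecondCountableTopology Y]

/-- **Lemma 1, risk-shift bound.**
`R_{ν'}(E) ≤ R_ν(E) + c(ν,ν') · W₂(ν,ν')`. -/
theorem risk_shift (F E : X × Θ → Y) (L R B : ℝ)
    (hF : ∀ u v : X × Θ, ‖F u - F v‖ ≤ L * nU (u - v))
    (hE : ∀ u v : X × Θ, ‖E u - E v‖ ≤ R * nU (u - v))
    (hE0 : ‖E 0‖ ≤ B)
    (ν ν' : Measure (X × Θ)) [IsProbabilityMeasure ν] [IsProbabilityMeasure ν']
    (hν : Integrable (fun u => nU u ^ 2) ν) (hν' : Integrable (fun u => nU u ^ 2) ν') :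
    risk F E ν' ≤ risk F E ν + cShift L R B F ν ν' * W2 (fun u v => nU (u - v)) ν ν' := by
  rcases subsingleton_or_nontrivial (X × Θ) with hU | hU
  · -- here `L`, `R` and hence `cShift` may be negative, but `W₂ = 0`
    have hW : W2 (fun u v => nU (u - v)) ν ν' = 0 :=
      le_antisymm ((W2_le_sqrt_integral_sq (ν.prod ν') (by simp) (by simp)).trans_eq
        (by simp [Subsingleton.elim _ (0 : X × Θ), nU])) W2_nonneg
    have hrisk : risk F E ν' = risk F E ν := by
      simp [risk, Subsingleton.elim _ (0 : X × Θ)]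
    rw [hW, mul_zero, add_zero, hrisk]
  have hL := nonneg_of_norm_sub_le_mul_nU hF
  have hR := nonneg_of_norm_sub_le_mul_nU hE
  have hG (u v : X × Θ) : ‖(F - E) u - (F - E) v‖ ≤ (L + R) * nU (u - v) := by
    calc ‖(F - E) u - (F - E) v‖ = ‖(F u - F v) - (E u - E v)‖ :=
          congrArg norm (sub_sub_sub_comm _ _ _ _)
      _ ≤ ‖F u - F v‖ + ‖E u - E v‖ := norm_sub_le _ _
      _ ≤ (L + R) * nU (u - v) := by linarith [hF u v, hE u v]
  have hG0 : ‖(F - E) 0‖ ≤ ‖F 0‖ + B := (norm_sub_le _ _).trans (by linarith)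
  have hc : 0 ≤ cShift L R B F ν ν' :=
    add_nonneg (mul_nonneg (sq_nonneg _) (Real.sqrt_nonneg _))
      (mul_nonneg (mul_nonneg zero_le_two (add_nonneg hL hR)) ((norm_nonneg _).trans hG0))
  exact le_add_mul_W2 hc fun γ _ h₁ h₂ =>
    integral_sq_norm_le_of_coupling γ hG hG0 (add_nonneg hL hR) hν hν' h₁ h₂
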